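/- arXiv:1707.03956 — 2 statements merged into one kernel-verified Lean document; each statement's English description precedes it below -/
import Mathlib

section
/- Let q ≥ 2, let k ∈ {2,3}, and let x = uvw be a word over Σ_q with |u| = i and |v| = k, so that T_{i,k}(x) = uvvw. If the symbols of v are not pairwise distinct, then there exist lengths ℓ₁, ℓ₂ with k > ℓ₁ ≥ ℓ₂ ≥ 1 and positions j₁, j₂ such that T_{j₂,ℓ₂}(T_{j₁,ℓ₁}(x)) = T_{i,k}(x). -/
/-- Tandem duplication of the length-`k` block starting at position `i`:
`x = u v w` with `|u| = i`, `|v| = k` is sent to `u v v w`. -/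
def DupAt {α : Type*} (i k : ℕ) (x y : List α) : Prop :=
  ∃ u v w : List α, x = u ++ v ++ w ∧ u.length = i ∧ v.length = k ∧ y = u ++ v ++ v ++ w

/-- A single tandem duplication of some length between `1` and `k`. -/
def DupLE {α : Type*} (k : ℕ) (x y : List α) : Prop :=
  ∃ u v w : List α, x = u ++ v ++ w ∧ 1 ≤ v.length ∧ v.length ≤ k ∧ y = u ++ v ++ v ++ w

/-- A single tandem duplication of length exactly `k` whose duplicated block has
pairwise distinct symbols. -/
def DupD {α : Type*} (k : ℕ) (x y : List α) : Prop :=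
  ∃ u v w : List α, x = u ++ v ++ w ∧ v.length = k ∧ v.Nodup ∧ y = u ++ v ++ v ++ w

/-- `x ⇒*_{≤k} y`: `y` is obtained from `x` by finitely many tandem duplications of
length at most `k`. -/
def DerivLE {α : Type*} (k : ℕ) : List α → List α → Prop := Relation.ReflTransGen (DupLE k)

/-- `x ⇒*_{k_d} y`: finitely many tandem duplications of length exactly `k`, each
duplicated block having pairwise distinct symbols. -/
def DerivD {α : Type*} (k : ℕ) : List α → List α → Prop := Relation.ReflTransGen (DupD k)

/-- `x` is `≤k`-irreducible: it contains no square `v v` with `1 ≤ |v| ≤ k`. -/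
def IrredLE {α : Type*} (k : ℕ) (x : List α) : Prop :=
  ¬ ∃ u v w : List α, 1 ≤ v.length ∧ v.length ≤ k ∧ x = u ++ v ++ v ++ w

/-- The set of `≤k`-roots of `x`. -/
def RootsLE {α : Type*} (k : ℕ) (x : List α) : Set (List α) :=
  {z | IrredLE k z ∧ DerivLE k z x}

/-- `x` and `y` are `≤k`-confusable. -/
def Confusable {α : Type*} (k : ℕ) (x y : List α) : Prop :=
  ∃ z, DerivLE k x z ∧ DerivLE k y z

/-- `r` contains at least three distinct symbols. -/
def Has3 {α : Type*} [DecidableEq α] (r : List α) : Prop := 3 ≤ r.toFinset.card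

/-- The region `Reg(r)` of a `≤3`-irreducible word `r` with at least three distinct
symbols. -/
def Reg {α : Type*} [DecidableEq α] (r : List α) : List α :=
  if r[0]? = r[2]? then
    if r[1]? ≠ r[4]? then r.take 4
    else if r[2]? ≠ r[5]? then r.take 5
    else r.take 6
  else
    if r[0]? ≠ r[3]? then r.take 3
    else if r[1]? ≠ r[4]? then r.take 4
    else r.take 5

/-- `main(r)`: the first length-3 substring of `r` with pairwise distinct symbols. -/
def mainSub {α : Type*} [DecidableEq α] (r : List α) : List α :=
  if r[0]? = r[2]? then (r.drop 1).take 3 else r.take 3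

/-- The number of occurrences of `z` as a contiguous substring of `x`. -/
def Count {α : Type*} [DecidableEq α] (z x : List α) : ℕ :=
  ((List.range (x.length + 1)).filter fun i => decide ((x.drop i).take z.length = z)).length

/-- `Count(rot(z), x)` for a length-3 word `z = abc`:
occurrences of `abc`, `bca` and `cab` in `x`. -/
def CountRot {α : Type*} [DecidableEq α] (z x : List α) : ℕ :=
  Count z x + Count (z.rotate 1) x + Count (z.rotate 2) x

/-- `ExtPref(g, x)`: the longest prefix of `x` belonging to `D*_{≤3}(g)`. -/
noncomputable def ExtPref {α : Type*} (g x : List α) : List α :=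
  letI : DecidablePred fun n => DerivLE 3 g (x.take n) := Classical.decPred _
  x.take (Nat.findGreatest (fun n => DerivLE 3 g (x.take n)) x.length)

/-- The symbol `a` when `Reg r = w (a b c)^ℓ a b`, i.e. the second-to-last symbol
of `Reg r`. -/
def regA {α : Type*} [DecidableEq α] [Inhabited α] (r : List α) : α :=
  (Reg r).reverse.getD 1 default

/-- The special prefix `*Pref(r, x)`: with `p = ExtPref(Reg r, x)` and `p_i` the last
occurrence of the symbol `a` in `p`, this is `p₁ ⋯ p_{i-1}`. -/
noncomputable def starPref {α : Type*} [DecidableEq α] [Inhabited α] (r x : List α) : List α :=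
  (ExtPref (Reg r) x).take
    ((ExtPref (Reg r) x).length - 1 - (ExtPref (Reg r) x).reverse.idxOf (regA r))

/-- The unique `≤k`-root of `x` (when it is unique). -/
noncomputable def rootLE {α : Type*} (k : ℕ) (x : List α) : List α :=
  letI := Classical.propDecidable (∃ z, RootsLE k x = {z})
  if h : ∃ z, RootsLE k x = {z} then h.choose else x

/-- The sequence `x₁, x₂, …` with `x₁ = x` and `x_{j+1} = x_j ∖ *Pref(r_j, x_j)`
where `r_j` is the unique `≤3`-root of `x_j` (0-indexed: `seqX x j = x_{j+1}`). -/
noncomputable def seqX {α : Type*} [DecidableEq α] [Inhabited α] (x : List α) : ℕ → List α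
  | 0 => x
  | n + 1 => (seqX x n).drop (starPref (rootLE 3 (seqX x n)) (seqX x n)).length

/-- `r_{j+1}`, the unique `≤3`-root of `x_{j+1}` (0-indexed). -/
noncomputable def rj {α : Type*} [DecidableEq α] [Inhabited α] (x : List α) (j : ℕ) : List α :=
  rootLE 3 (seqX x j)

/-- `x` determines `m` regions: the roots `r₁, …, r_m` have at least three distinct
symbols and `r_{m+1}` does not. -/
def HasRegionsX {α : Type*} [DecidableEq α] [Inhabited α] (x : List α) (m : ℕ) : Prop :=
  (∀ j < m, Has3 (rj x j)) ∧ ¬ Has3 (rj x m)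

/-- `c_{j+1}` in the label of `x` (0-indexed):
`Count(main(r_{j+1}), R_{≤2}(p_{j+1}))` where `p_{j+1} = ExtPref(Reg(r_{j+1}), x_{j+1})`. -/
noncomputable def labelC {α : Type*} [DecidableEq α] [Inhabited α] (x : List α) (j : ℕ) : ℕ :=
  Count (mainSub (rj x j)) (rootLE 2 (ExtPref (Reg (rj x j)) (seqX x j)))

/-- `δ_{j+1} = +` in the label of `x` (0-indexed):
`Count(rot(main(r_{j+1})), p_{j+1}) > 0`. -/
noncomputable def labelPlus {α : Type*} [DecidableEq α] [Inhabited α] (x : List α) (j : ℕ) : Prop :=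
  0 < CountRot (mainSub (rj x j)) (ExtPref (Reg (rj x j)) (seqX x j))

/-- The sequence `ρ₁, ρ₂, …` defining the regions of `r`:
`ρ_{j+1}` is `ρ_j` with the prefix `w (abc)^ℓ` removed, where `Reg(ρ_j) = w (abc)^ℓ ab`. -/
def rho {α : Type*} [DecidableEq α] (r : List α) : ℕ → List α
  | 0 => r
  | n + 1 => (rho r n).drop ((Reg (rho r n)).length - 2)

/-- The `≤3`-irreducible word `r` has exactly `m` regions. -/
def HasRegionsR {α : Type*} [DecidableEq α] (r : List α) (m : ℕ) : Prop :=
  (∀ j < m, Has3 (rho r j)) ∧ ¬ Has3 (rho r m)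

/-- `C` is an `(n, ≤3; r)`-TD code: words of length `n` in `D*_{≤3}(r)`, pairwise
non-`≤3`-confusable. -/
def TDCode (n : ℕ) (r : List (Fin 3)) (C : Finset (List (Fin 3))) : Prop :=
  (∀ x ∈ C, x.length = n ∧ DerivLE 3 r x) ∧
    ∀ x ∈ C, ∀ y ∈ C, x ≠ y → ¬ Confusable 3 x y

/-- `T(n, r)`: the maximum size of an `(n, ≤3; r)`-TD code. -/
noncomputable def Tnr (n : ℕ) (r : List (Fin 3)) : ℕ :=
  sSup {k | ∃ C : Finset (List (Fin 3)), TDCode n r C ∧ C.card = k}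

/-- `C` is an `(n, ≤3; 3)`-TD code. -/
def TDCodeAll (n : ℕ) (C : Finset (List (Fin 3))) : Prop :=
  (∀ x ∈ C, x.length = n) ∧ ∀ x ∈ C, ∀ y ∈ C, x ≠ y → ¬ Confusable 3 x y

/-- `T(n)`: the maximum size of an `(n, ≤3; 3)`-TD code. -/
noncomputable def Tn (n : ℕ) : ℕ :=
  sSup {k | ∃ C : Finset (List (Fin 3)), TDCodeAll n C ∧ C.card = k}

/-- `|Irr_{≤3}(i, 3)|`: the number of `≤3`-irreducible ternary words of length `i`. -/
noncomputable def IrrCount (i : ℕ) : ℕ :=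
  Nat.card {x : List (Fin 3) // x.length = i ∧ IrredLE 3 x}

/-- The two codewords of Construction 2 built from the `≤3`-irreducible word
`r = r₁ r₂ ⋯ r_i` (with `i ≥ 4`). -/
def C2 (r : List (Fin 3)) : List (Fin 3) × List (Fin 3) :=
  let r1 := r.getD 0 0; let r2 := r.getD 1 0; let r3 := r.getD 2 0
  let r4 := r.getD 3 0; let r5 := r.getD 4 0
  if r1 ≠ r3 then
    (r.take 3 ++ r, [r1, r2, r2, r3, r3, r4, r4] ++ r.drop 4)
  else if 5 ≤ r.length then
    ([r1, r2, r1, r4, r2, r1, r4] ++ r.drop 4,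
      [r1, r2, r1, r1, r4, r4, r5, r5] ++ r.drop 5)
  else
    ([r1, r2, r1, r4, r2, r1, r4], [r1, r2, r1, r1, r4, r4, r4])

theorem DupAt.append_append {α : Type*} {i k : ℕ} {x y : List α} (h : DupAt i k x y)
    (u w : List α) : DupAt (u.length + i) k (u ++ x ++ w) (u ++ y ++ w) := by
  obtain ⟨s, t, r, rfl, rfl, rfl, rfl⟩ := h
  exact ⟨u ++ s, t, r ++ w, by simp, by simp, rfl, by simp⟩

theorem dupAt_append {α : Type*} (u v w : List α) :
    DupAt u.length v.length (u ++ v ++ w) (u ++ v ++ v ++ w) :=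
  ⟨u, v, w, rfl, rfl, rfl, rfl⟩

def TwoShorterDups {α : Type*} (k : ℕ) (x y : List α) : Prop :=
  ∃ (ℓ₁ ℓ₂ j₁ j₂ : ℕ) (z : List α),
    1 ≤ ℓ₂ ∧ ℓ₂ ≤ ℓ₁ ∧ ℓ₁ < k ∧ DupAt j₁ ℓ₁ x z ∧ DupAt j₂ ℓ₂ z y

theorem TwoShorterDups.append_append {α : Type*} {k : ℕ} {x y : List α}
    (h : TwoShorterDups k x y) (u w : List α) : TwoShorterDups k (u ++ x ++ w) (u ++ y ++ w) := by
  obtain ⟨ℓ₁, ℓ₂, j₁, j₂, z, h₂, h₂₁, h₁, hx, hz⟩ := h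
  exact ⟨ℓ₁, ℓ₂, _, _, _, h₂, h₂₁, h₁, hx.append_append u w, hz.append_append u w⟩

theorem twoShorterDups_square_of_not_nodup {α : Type*} {k : ℕ} (hk : k = 2 ∨ k = 3)
    {v : List α} (hv : v.length = k) (hnd : ¬ v.Nodup) : TwoShorterDups k v (v ++ v) := by
  subst hv
  rcases hk with hk | hk
  · obtain ⟨a, b, rfl⟩ := List.length_eq_two.mp hk
    obtain rfl : a = b := by simpa using hnd
    -- `aa → aaa → aaaa`
    exact ⟨1, 1, 0, 0, _, le_rfl, le_rfl, by simp,
      dupAt_append [] [a] [a], dupAt_append [] [a] [a, a]⟩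
  · obtain ⟨a, b, c, rfl⟩ := List.length_eq_three.mp hk
    have hrep : a = b ∨ a = c ∨ b = c := by
      by_contra! h
      exact hnd (by simp [h.1, h.2.1, h.2.2])
    rcases hrep with rfl | rfl | rfl
    · -- `aac → a·ac·ac → aac·aac`
      exact ⟨2, 1, 1, 3, _, le_rfl, by simp, by simp,
        dupAt_append [a] [a, c] [], dupAt_append [a, a, c] [a] [c]⟩
    · -- `aba → ab·ab·a → aba·aba`
      exact ⟨2, 1, 0, 2, _, le_rfl, by simp, by simp,
        dupAt_append [] [a, b] [a], dupAt_append [a, b] [a] [b, a]⟩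
    · -- `abb → ab·ab·b → abb·abb`
      exact ⟨2, 1, 0, 1, _, le_rfl, by simp, by simp,
        dupAt_append [] [a, b] [b], dupAt_append [a] [b] [a, b, b]⟩

theorem nondistinct_duplication_shorter_general (q : ℕ) (k : ℕ) (hk : k = 2 ∨ k = 3)
    (u v w : List (Fin q)) (hv : v.length = k) (hnd : ¬ v.Nodup) :
    ∃ (ℓ₁ ℓ₂ j₁ j₂ : ℕ) (z : List (Fin q)),
      1 ≤ ℓ₂ ∧ ℓ₂ ≤ ℓ₁ ∧ ℓ₁ < k ∧
      DupAt j₁ ℓ₁ (u ++ v ++ w) z ∧ DupAt j₂ ℓ₂ z (u ++ v ++ v ++ w) := by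
  have h := (twoShorterDups_square_of_not_nodup hk hv hnd).append_append u w
  rwa [← List.append_assoc] at h

/-- Lemma 6: a tandem duplication of length `k ∈ {2,3}` whose duplicated
block does not have pairwise distinct symbols can be replaced by two tandem duplications of
strictly smaller (nonincreasing) lengths. -/
theorem nondistinct_duplication_shorter (q : ℕ) (hq : 2 ≤ q) (k : ℕ) (hk : k = 2 ∨ k = 3)
    (u v w : List (Fin q)) (hv : v.length = k) (hnd : ¬ v.Nodup) :
    ∃ (ℓ₁ ℓ₂ j₁ j₂ : ℕ) (z : List (Fin q)),
      1 ≤ ℓ₂ ∧ ℓ₂ ≤ ℓ₁ ∧ ℓ₁ < k ∧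
      DupAt j₁ ℓ₁ (u ++ v ++ w) z ∧ DupAt j₂ ℓ₂ z (u ++ v ++ v ++ w) :=
  nondistinct_duplication_shorter_general q k hk u v w hv hnd
end

section
/- Let r = r₁r₂⋯r_i be a ≤3-irreducible ternary word with i ≥ 3 and r₁ = r₃, and let n ≥ i. Then T(n, r) ≥ T(n−1, r∖r₁), where r∖r₁ = r₂r₃⋯r_i is r with its first symbol removed. -/
/-!
Write `r = a b a s`. Prepending `a` to the codewords of a code for `r ∖ r₁ = b a s` gives a
code for `r` of the same size; the point is that it creates no confusability. Every descendant
`x` of `b a s` begins with `b^{p+1} a`, and then `x ⇒* b^{q+1} a x` for all `q ≥ p` (duplicate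
`b a` and pump the run of `b`). Hence a common descendant `z` of `a x` and `a y` gives the
common descendant `b^{q+1} z` of `x` and `y`.
-/

open List

section Duplication

variable {α : Type*} {k : ℕ}

lemma DupLE.append_left (p : List α) {x y : List α} (h : DupLE k x y) :
    DupLE k (p ++ x) (p ++ y) := by
  obtain ⟨u, v, w, rfl, h1, h2, rfl⟩ := h
  exact ⟨p ++ u, v, w, by simp, h1, h2, by simp⟩

lemma DerivLE.append_left (p : List α) {x y : List α} (h : DerivLE k x y) :
    DerivLE k (p ++ x) (p ++ y) :=
  Relation.ReflTransGen.lift (p ++ ·) (fun _ _ => DupLE.append_left p) _ _ h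

lemma DerivLE.cons (c : α) {x y : List α} (h : DerivLE k x y) :
    DerivLE k (c :: x) (c :: y) :=
  h.append_left [c]

lemma derivLE_replicate_append (hk : 1 ≤ k) (b : α) (l : List α) {p q : ℕ} (hpq : p ≤ q) :
    DerivLE k (replicate (p + 1) b ++ l) (replicate (q + 1) b ++ l) := by
  induction q, hpq using Nat.le_induction with
  | base => exact .refl
  | succ q _ ih =>
    refine ih.tail ⟨[], [b], replicate q b ++ l, ?_, le_rfl, hk, ?_⟩ <;> simp [replicate_succ]

lemma derivLE_replicate_cons_square (hk : 2 ≤ k) (b a : α) (p : ℕ) (x : List α) :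
    DerivLE k (replicate (p + 1) b ++ a :: x)
      (replicate (p + 1) b ++ a :: (replicate (p + 1) b ++ a :: x)) := by
  induction p with
  | zero => exact .single ⟨[], [b, a], x, by simp, by simp, by simpa, by simp⟩
  | succ p ih =>
    have h : DerivLE k (replicate (p + 2) b ++ a :: x)
        (replicate (p + 2) b ++ a :: (replicate (p + 1) b ++ a :: x)) := by
      simpa [replicate_succ] using ih.cons b
    refine h.tail ⟨replicate (p + 2) b ++ [a], [b], replicate p b ++ a :: x, ?_, le_rfl,
      by simp; omega, ?_⟩ <;> simp [replicate_succ]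

def HasRunPrefix (b a : α) (x : List α) : Prop :=
  ∃ p, replicate (p + 1) b ++ [a] <+: x

variable {b a : α} {x y : List α}

lemma HasRunPrefix.of_dupLE (hx : HasRunPrefix b a x) (h : DupLE k x y) :
    HasRunPrefix b a y := by
  obtain ⟨p, hp⟩ := hx
  obtain ⟨u, v, w, rfl, -, -, rfl⟩ := h
  have huv : u ++ v <+: u ++ v ++ w := prefix_append _ _
  by_cases hlen : p + 2 ≤ (u ++ v).length
  · refine ⟨p, (prefix_of_prefix_length_le hp huv ?_).trans ⟨v ++ w, by simp⟩⟩
    simp at hlen ⊢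
    omega
  -- Otherwise `u v` lies inside the run of `b`, so the duplication just lengthens that run.
  have hrun : u ++ v <+: replicate (p + 1) b :=
    prefix_of_prefix_length_le huv ((prefix_append _ _).trans hp) (by simp at hlen ⊢; omega)
  obtain ⟨-, hu, hv'⟩ := append_eq_replicate_iff.mp (prefix_replicate_iff.mp hrun).2
  obtain ⟨i, rfl⟩ : ∃ i, u = replicate i b := ⟨_, hu⟩
  obtain ⟨j, rfl⟩ : ∃ j, v = replicate j b := ⟨_, hv'⟩
  have hy : replicate i b ++ replicate j b ++ replicate j b ++ w
      = replicate j b ++ (replicate i b ++ replicate j b ++ w) := by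
    simp only [← append_assoc, ← replicate_add]
    congr 2
    omega
  refine ⟨j + p, ?_⟩
  rw [hy, Nat.add_assoc, replicate_add, append_assoc]
  exact prefix_append_right_inj _ |>.mpr hp

lemma HasRunPrefix.of_derivLE (hx : HasRunPrefix b a x) (h : DerivLE k x y) :
    HasRunPrefix b a y := by
  induction h with
  | refl => exact hx
  | tail _ hyz ih => exact ih.of_dupLE hyz

lemma HasRunPrefix.exists_derivLE_replicate_cons (hk : 2 ≤ k) (hx : HasRunPrefix b a x) :
    ∃ p, ∀ q, p ≤ q → DerivLE k x (replicate (q + 1) b ++ a :: x) := by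
  obtain ⟨p, x', rfl⟩ := hx
  refine ⟨p, fun q hq => ?_⟩
  simp only [append_assoc, singleton_append]
  exact (derivLE_replicate_cons_square hk b a p x').trans
    (derivLE_replicate_append (by omega) b _ hq)

lemma HasRunPrefix.confusable_of_confusable_cons (hk : 2 ≤ k) (hx : HasRunPrefix b a x)
    (hy : HasRunPrefix b a y) (h : Confusable k (a :: x) (a :: y)) : Confusable k x y := by
  obtain ⟨z, hxz, hyz⟩ := h
  obtain ⟨p, hp⟩ := hx.exists_derivLE_replicate_cons hk
  obtain ⟨q, hq⟩ := hy.exists_derivLE_replicate_cons hk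
  exact ⟨replicate (max p q + 1) b ++ z,
    (hp _ (le_max_left p q)).trans (hxz.append_left _),
    (hq _ (le_max_right p q)).trans (hyz.append_left _)⟩

end Duplication

section Codes

variable {m n : ℕ} {r t : List (Fin 3)} {C : Finset (List (Fin 3))}

lemma TDCode.card_le (hC : TDCode n r C) : C.card ≤ 3 ^ n := by
  simpa [Finset.filter_true_of_mem fun x hx => (hC.1 x hx).1] using
    Finset.card_filter_length_eq_le (T := C) (s := n)

lemma Tnr_le_Tnr_of_forall_tdCode
    (h : ∀ C, TDCode m t C → ∃ C', TDCode n r C' ∧ C'.card = C.card) :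
    Tnr m t ≤ Tnr n r := by
  refine csSup_le_csSup ⟨3 ^ n, ?_⟩ ⟨0, ∅, by simp [TDCode], rfl⟩ ?_
  · rintro _ ⟨C, hC, rfl⟩
    exact hC.card_le
  · rintro _ ⟨C, hC, rfl⟩
    exact h C hC

lemma TDCode.image_cons {a b : Fin 3} {s : List (Fin 3)} (hC : TDCode m (b :: a :: s) C) :
    TDCode (m + 1) (a :: b :: a :: s) (C.image (a :: ·)) := by
  have hrun : ∀ x ∈ C, HasRunPrefix b a x := fun x hx =>
    HasRunPrefix.of_derivLE ⟨0, by simp⟩ (hC.1 x hx).2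
  refine ⟨?_, ?_⟩
  · simp only [Finset.forall_mem_image]
    intro x hx
    exact ⟨by simp [(hC.1 x hx).1], (hC.1 x hx).2.cons a⟩
  · simp only [Finset.forall_mem_image]
    intro x hx y hy hne hxy
    exact hC.2 x hx y hy (by rintro rfl; exact hne rfl)
      ((hrun x hx).confusable_of_confusable_cons (by norm_num) (hrun y hy) hxy)

end Codes

theorem recursive_bound_eq_general (r : List (Fin 3)) (n : ℕ)
    (h3 : 3 ≤ r.length) (h13 : r[0]? = r[2]?) (hn : r.length ≤ n) :
    Tnr (n - 1) r.tail ≤ Tnr n r := by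
  obtain ⟨a, b, c, s, rfl⟩ : ∃ a b c s, r = a :: b :: c :: s := by
    match r, h3 with
    | a :: b :: c :: s, _ => exact ⟨a, b, c, s, rfl⟩
  obtain rfl : a = c := by simpa using h13
  obtain ⟨m, rfl⟩ : ∃ m, n = m + 1 := Nat.exists_eq_add_one.mpr (by simp at hn; omega)
  exact Tnr_le_Tnr_of_forall_tdCode fun C hC =>
    ⟨_, hC.image_cons, Finset.card_image_of_injective _ cons_injective⟩

/-- Proposition 19, first case: if `r` is a `≤3`-irreducible ternary word
with `r₁ = r₃` and `n ≥ |r|`, then `T(n, r) ≥ T(n − 1, r ∖ r₁)`. -/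
theorem recursive_bound_eq (r : List (Fin 3)) (n : ℕ) (hirr : IrredLE 3 r)
    (h3 : 3 ≤ r.length) (h13 : r[0]? = r[2]?) (hn : r.length ≤ n) :
    Tnr (n - 1) r.tail ≤ Tnr n r :=
  recursive_bound_eq_general r n h3 h13 hn
end
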